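/- arXiv:0908.2475 — 4 statements merged into one kernel-verified Lean document; each statement's English description precedes it below -/
import Mathlib

section
/- If E₁ and E₂ are effects on a complex Hilbert space H (operators with 0 ≤ Eᵢ ≤ I) satisfying E₁² + E₂² = I, then E₁ and E₂ commute. -/
theorem Commute.of_mul_self_left {A : Type*} [NonUnitalCStarAlgebra A] [PartialOrder A]
    [StarOrderedRing A] {a b : A} (ha : 0 ≤ a) (h : Commute (a * a) b) : Commute a b :=
  CFC.sqrt_mul_self a ha ▸ h.cfcₙ_nnreal NNReal.sqrt

theorem commute_of_mul_self_add_mul_self_eq_one {A : Type*} [CStarAlgebra A] [PartialOrder A]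
    [StarOrderedRing A] {a b : A} (hb : 0 ≤ b) (h : a * a + b * b = 1) : Commute a b := by
  refine (Commute.of_mul_self_left hb ?_).symm
  rw [eq_sub_of_add_eq' h]
  exact (Commute.one_left a).sub_left ((Commute.refl a).mul_left (Commute.refl a))

theorem luders_two_effects_commute_general {H : Type*} [NormedAddCommGroup H] [InnerProductSpace ℂ H]
    [CompleteSpace H] (E₁ E₂ : H →L[ℂ] H)
    (h₂ : 0 ≤ E₂)
    (hsum : E₁ * E₁ + E₂ * E₂ = 1) :
    E₁ * E₂ = E₂ * E₁ :=
  commute_of_mul_self_add_mul_self_eq_one h₂ hsum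

/-- If two effects on a complex Hilbert space satisfy `E₁² + E₂² = I`, they commute. -/
theorem luders_two_effects_commute {H : Type*} [NormedAddCommGroup H] [InnerProductSpace ℂ H]
    [CompleteSpace H] (E₁ E₂ : H →L[ℂ] H)
    (h₁ : 0 ≤ E₁) (h₁' : E₁ ≤ 1) (h₂ : 0 ≤ E₂) (h₂' : E₂ ≤ 1)
    (hsum : E₁ * E₁ + E₂ * E₂ = 1) :
    E₁ * E₂ = E₂ * E₁ :=
  luders_two_effects_commute_general E₁ E₂ h₂ hsum
end

section
/- Let E₁,...,E_n be pairwise commuting effects on a complex Hilbert space H and B ∈ B(H). If B fails to commute with some E_{i₀}, then there exist a positive integer m and integer tuples (k₁,...,k_n), (k'₁,...,k'_n) with k_i ≠ k'_i for at least one i, such that F^m_{k₁,...,k_n} B F^m_{k'₁,...,k'_n} ≠ 0, where F^m_{k₁,...,k_n} = ∏_{i=1}^n P^{E_i}((k_i/m,(k_i+1)/m]). -/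
/-- A projection-valued (spectral) measure for the operator `A`. -/
structure IsSpectralMeasure {H : Type*} [NormedAddCommGroup H] [InnerProductSpace ℂ H]
    [CompleteSpace H] (A : H →L[ℂ] H) (P : Set ℝ → H →L[ℂ] H) : Prop where
  isIdem : ∀ s, IsIdempotentElem (P s)
  selfAdj : ∀ s, IsSelfAdjoint (P s)
  empty : P ∅ = 0
  univ : P Set.univ = 1
  inter : ∀ s t, P (s ∩ t) = P s * P t
  hasSum : ∀ (s : ℕ → Set ℝ), Pairwise (Function.onFun Disjoint s) →
    ∀ x, HasSum (fun n => P (s n) x) (P (⋃ n, s n) x)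
  commutes : ∀ s, A * P s = P s * A
  smul_le : ∀ a b : ℝ, (a : ℂ) • P (Set.Ioc a b) ≤ P (Set.Ioc a b) * A * P (Set.Ioc a b)
  le_smul : ∀ a b : ℝ, P (Set.Ioc a b) * A * P (Set.Ioc a b) ≤ (b : ℂ) • P (Set.Ioc a b)

/-- The product of spectral projections `F^m_{k₁,…,k_n} = ∏ᵢ P^{Eᵢ}((kᵢ/m,(kᵢ+1)/m])`. -/
noncomputable def Fproj {H : Type*} [NormedAddCommGroup H] [InnerProductSpace ℂ H]
    [CompleteSpace H] {n : ℕ} (P : Fin n → Set ℝ → H →L[ℂ] H) (m : ℕ) (k : Fin n → ℤ) :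
    H →L[ℂ] H :=
  (List.ofFn fun i => P i (Set.Ioc ((k i : ℝ) / m) (((k i : ℝ) + 1) / m))).prod

/-!
Suppose every compression `F^m_k B F^m_k'` with `k ≠ k'` vanishes, and fix `i₀` and `m`. Write
`Q_r = P^{E_{i₀}}((r/m, (r+1)/m])`. Since `0 ≤ E_i ≤ 1`, the grid projections of every `E_i` with
`-1 ≤ r ≤ m` sum to `1`, hence so do the `F^m_k`; and `Q_r F^m_k` is `F^m_k` or `0` according as
`k_{i₀} = r` or not. Expanding `Q_r B` and `B Q_r` over the `F^m_k` on both sides therefore gives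
the same sum, so `B` commutes with every `Q_r`. The spectral bounds `(r/m) Q_r ≤ Q_r E_{i₀} Q_r ≤
((r+1)/m) Q_r` put `E_{i₀}` within `1/m` in norm of the step operator `∑ (r/m) Q_r`, which commutes
with `B`; so `‖[B, E_{i₀}]‖ ≤ 2‖B‖/m` for every `m`.
-/

open Set Function Filter Topology

theorem IsIdempotentElem.mul_list_prod_of_mem {M : Type*} [Monoid M] {x : M} {l : List M}
    (hx : IsIdempotentElem x) (hmem : x ∈ l) (hcomm : ∀ y ∈ l, Commute x y) :
    x * l.prod = l.prod := by
  obtain ⟨s, t, rfl⟩ := List.append_of_mem hmem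
  have hs : Commute x s.prod := Commute.list_prod_right _ _ fun y hy => hcomm y (by simp [hy])
  rw [List.prod_append, List.prod_cons, ← mul_assoc, hs.eq, mul_assoc, ← mul_assoc x, hx.eq]

theorem prod_ofFn_sum_eq_sum_piFinset {R ι : Type*} [Semiring R] {n : ℕ} (t : Fin n → Finset ι)
    (f : Fin n → ι → R) :
    (List.ofFn fun i => ∑ j ∈ t i, f i j).prod =
      ∑ k ∈ Fintype.piFinset t, (List.ofFn fun i => f i (k i)).prod := by
  induction n with
  | zero => simp
  | succ n ih =>
    rw [List.ofFn_succ, List.prod_cons, ih, Finset.sum_mul_sum, ← Finset.sum_product']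
    refine Finset.sum_equiv (Fin.consEquiv fun _ => ι) (fun p => ?_) fun p _ => ?_
    · simp [Fin.forall_fin_succ]
    · simp [List.ofFn_succ]

theorem commute_of_offDiag_eq_zero {R K ι : Type*} [Semiring R] [DecidableEq ι] {s : Finset K}
    {F : K → R} (hF : ∑ k ∈ s, F k = 1) (g : K → ι) (r : ι) {Q B : R}
    (hQF : ∀ k, Q * F k = if g k = r then F k else 0) (hFQ : ∀ k, Commute Q (F k))
    (hB : ∀ k ∈ s, ∀ k' ∈ s, g k ≠ g k' → F k * B * F k' = 0) : Commute Q B := by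
  have hFQ' : ∀ k, F k * Q = if g k = r then F k else 0 := fun k => (hFQ k).eq ▸ hQF k
  have hexpand : B = ∑ k ∈ s, ∑ k' ∈ s, F k * B * F k' := by
    simp only [← Finset.sum_mul, ← Finset.mul_sum, hF, one_mul, mul_one]
  have hterm : ∀ k ∈ s, ∀ k' ∈ s, Q * (F k * B * F k') = F k * B * F k' * Q := by
    intro k hk k' hk'
    rw [← mul_assoc, ← mul_assoc, hQF, mul_assoc _ (F k'), hFQ']
    split_ifs with h h' h'
    · rfl
    · simp [hB k hk k' hk' (by rwa [h, ne_comm])]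
    · simp [hB k hk k' hk' (by rwa [h'])]
    · simp
  rw [Commute, SemiconjBy, hexpand, Finset.mul_sum, Finset.sum_mul]
  refine Finset.sum_congr rfl fun k hk => ?_
  rw [Finset.mul_sum, Finset.sum_mul]
  exact Finset.sum_congr rfl fun k' hk' => hterm k hk k' hk'

theorem norm_commutator_le_of_commute {R : Type*} [NonUnitalSeminormedRing R] {a b d : R}
    (h : Commute b d) : ‖b * a - a * b‖ ≤ 2 * ‖b‖ * ‖a - d‖ := by
  have : b * a - a * b = b * (a - d) - (a - d) * b := by
    rw [mul_sub, sub_mul, h.eq]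
    abel
  calc ‖b * a - a * b‖ ≤ ‖b * (a - d)‖ + ‖(a - d) * b‖ := this ▸ norm_sub_le _ _
    _ ≤ ‖b‖ * ‖a - d‖ + ‖a - d‖ * ‖b‖ := add_le_add (norm_mul_le _ _) (norm_mul_le _ _)
    _ = 2 * ‖b‖ * ‖a - d‖ := by ring

def gridIoc (m : ℕ) (j : ℤ) : Set ℝ := Ioc ((j : ℝ) / m) (((j : ℝ) + 1) / m)

theorem mem_gridIoc_iff {m : ℕ} (hm : 0 < m) {j : ℤ} {x : ℝ} :
    x ∈ gridIoc m j ↔ ⌈x * m⌉ = j + 1 := by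
  have hm' : (0 : ℝ) < m := by exact_mod_cast hm
  rw [Int.ceil_eq_iff, gridIoc, mem_Ioc, div_lt_iff₀ hm', le_div_iff₀ hm']
  push_cast
  rw [add_sub_cancel_right]

theorem pairwise_disjoint_gridIoc {m : ℕ} (hm : 0 < m) : Pairwise (Disjoint on gridIoc m) :=
  fun i j hij => disjoint_left.2 fun x hi hj => hij <| by
    have := (mem_gridIoc_iff hm).1 hi
    have := (mem_gridIoc_iff hm).1 hj
    omega

theorem Ioc_subset_biUnion_gridIoc {m : ℕ} (hm : 0 < m) :
    Ioc (-1 / m : ℝ) ((m + 1) / m) ⊆ ⋃ j ∈ Finset.Icc (-1 : ℤ) m, gridIoc m j := by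
  have hm' : (0 : ℝ) < m := by exact_mod_cast hm
  rintro x ⟨h₁, h₂⟩
  rw [div_lt_iff₀ hm'] at h₁
  rw [le_div_iff₀ hm'] at h₂
  have hlo : -1 < ⌈x * m⌉ := Int.lt_ceil.2 (by push_cast; linarith)
  have hhi : ⌈x * m⌉ ≤ m + 1 := Int.ceil_le.2 (by push_cast; linarith)
  refine mem_iUnion₂.2 ⟨⌈x * m⌉ - 1, Finset.mem_Icc.2 ⟨by omega, by omega⟩, ?_⟩
  exact (mem_gridIoc_iff hm).2 (by ring)

namespace IsSpectralMeasure

variable {H : Type*} [NormedAddCommGroup H] [InnerProductSpace ℂ H] [CompleteSpace H]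
  {A : H →L[ℂ] H} {P : Set ℝ → H →L[ℂ] H} {m : ℕ}

theorem union_of_disjoint (hP : IsSpectralMeasure A P) {s t : Set ℝ} (hst : Disjoint s t) :
    P (s ∪ t) = P s + P t := by
  let u : ℕ → Set ℝ := fun n => if n = 0 then s else if n = 1 then t else ∅
  have hu : Pairwise (Disjoint on u) := by
    rintro (_ | _ | i) (_ | _ | j) hij <;> simp_all [u, Function.onFun, hst.symm]
  have hU : ⋃ n, u n = s ∪ t := by
    ext x
    simp only [mem_iUnion, mem_union]
    refine ⟨fun ⟨n, hn⟩ => ?_, ?_⟩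
    · rcases n with _ | _ | n <;> simp_all [u]
    · rintro (hx | hx)
      exacts [⟨0, hx⟩, ⟨1, hx⟩]
  have hfin : ∀ n ∉ Finset.range 2, P (u n) = 0 := fun n hn => by
    simp only [Finset.mem_range, not_lt] at hn
    simp [u, hP.empty, show n ≠ 0 by omega, show n ≠ 1 by omega]
  ext x
  have h₂ : HasSum (fun n => P (u n) x) (∑ n ∈ Finset.range 2, P (u n) x) :=
    hasSum_sum_of_ne_finset_zero fun n hn => by simp [hfin n hn]
  have h₁ := hP.hasSum u hu x
  rw [hU] at h₁
  simpa [u, Finset.sum_range_succ] using h₁.unique h₂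

theorem eq_zero_of_subset (hP : IsSpectralMeasure A P) {s t : Set ℝ} (hst : s ⊆ t)
    (ht : P t = 0) : P s = 0 := by
  rw [← inter_eq_left.2 hst, hP.inter, ht, mul_zero]

theorem mul_eq_zero_of_disjoint (hP : IsSpectralMeasure A P) {s t : Set ℝ} (hst : Disjoint s t) :
    P s * P t = 0 := by
  rw [← hP.inter, hst.inter_eq, hP.empty]

theorem iUnion_eq_zero (hP : IsSpectralMeasure A P) {s : ℕ → Set ℝ} (hs : ∀ n, P (s n) = 0) :
    P (⋃ n, s n) = 0 := by
  ext x
  have h := hP.hasSum (disjointed s) (disjoint_disjointed s) x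
  simp only [fun n => hP.eq_zero_of_subset (disjointed_subset s n) (hs n), iUnion_disjointed] at h
  simpa using h.unique hasSum_zero

theorem nonneg (hP : IsSpectralMeasure A P) (s : Set ℝ) : 0 ≤ P s := by
  simpa [(hP.selfAdj s).star_eq, (hP.isIdem s).eq] using star_mul_self_nonneg (P s)

theorem Ioc_eq_zero_of_neg (hP : IsSpectralMeasure A P) (hA : 0 ≤ A) (a : ℝ) {b : ℝ} (hb : b < 0) :
    P (Ioc a b) = 0 := by
  have h₁ : 0 ≤ (b : ℂ) • P (Ioc a b) := by
    refine le_trans ?_ (hP.le_smul a b)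
    simpa [(hP.selfAdj _).star_eq] using star_left_conjugate_nonneg hA (P (Ioc a b))
  have h₂ : 0 ≤ (-b) • P (Ioc a b) := smul_nonneg (by linarith) (hP.nonneg _)
  rw [neg_smul, neg_nonneg, ← Complex.coe_smul] at h₂
  have := le_antisymm h₂ h₁
  simpa [hb.ne] using this

theorem Ioc_eq_zero_of_one_lt (hP : IsSpectralMeasure A P) (hA : A ≤ 1) {a : ℝ} (ha : 1 < a)
    (b : ℝ) : P (Ioc a b) = 0 := by
  have h₁ : a • P (Ioc a b) ≤ P (Ioc a b) := by
    rw [← Complex.coe_smul]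
    refine (hP.smul_le a b).trans ?_
    simpa [(hP.selfAdj _).star_eq, (hP.isIdem _).eq] using
      star_left_conjugate_le_conjugate hA (P (Ioc a b))
  have h₂ : 0 ≤ (a - 1) • P (Ioc a b) := smul_nonneg (by linarith) (hP.nonneg _)
  have h₃ : (a - 1) • P (Ioc a b) = 0 := le_antisymm (by rwa [sub_smul, one_smul, sub_nonpos]) h₂
  simpa [sub_ne_zero.2 ha.ne'] using h₃

theorem Iic_eq_zero (hP : IsSpectralMeasure A P) (hA : 0 ≤ A) {c : ℝ} (hc : c < 0) :
    P (Iic c) = 0 := by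
  refine hP.eq_zero_of_subset (t := ⋃ n : ℕ, Ioc (c - n) c) (fun x hx => ?_)
    (hP.iUnion_eq_zero fun n => hP.Ioc_eq_zero_of_neg hA _ hc)
  obtain ⟨n, hn⟩ := exists_nat_gt (c - x)
  exact mem_iUnion.2 ⟨n, by linarith, hx⟩

theorem Ioi_eq_zero (hP : IsSpectralMeasure A P) (hA : A ≤ 1) {d : ℝ} (hd : 1 < d) :
    P (Ioi d) = 0 := by
  refine hP.eq_zero_of_subset (t := ⋃ n : ℕ, Ioc d (d + n)) (fun x hx => ?_)
    (hP.iUnion_eq_zero fun n => hP.Ioc_eq_zero_of_one_lt hA hd _)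
  obtain ⟨n, hn⟩ := exists_nat_gt (x - d)
  exact mem_iUnion.2 ⟨n, hx, by linarith⟩

theorem eq_one_of_Ioc_subset (hP : IsSpectralMeasure A P) (hA₀ : 0 ≤ A) (hA₁ : A ≤ 1)
    {c d : ℝ} (hc : c < 0) (hd : 1 < d) {s : Set ℝ} (hs : Ioc c d ⊆ s) : P s = 1 := by
  have hcompl : P sᶜ = 0 := by
    refine hP.eq_zero_of_subset (t := Iic c ∪ Ioi d) (fun x hx => ?_) ?_
    · by_contra h
      simp only [mem_union, mem_Iic, mem_Ioi, not_or, not_le, not_lt] at h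
      exact hx (hs ⟨h.1, h.2⟩)
    · rw [hP.union_of_disjoint (Iic_disjoint_Ioi (by linarith)), hP.Iic_eq_zero hA₀ hc,
        hP.Ioi_eq_zero hA₁ hd, add_zero]
  rw [← add_zero (P s), ← hcompl, ← hP.union_of_disjoint disjoint_compl_right, union_compl_self,
    hP.univ]

theorem sum_eq_biUnion {ι : Type*} (hP : IsSpectralMeasure A P) (s : Finset ι) {t : ι → Set ℝ}
    (ht : (s : Set ι).PairwiseDisjoint t) : ∑ i ∈ s, P (t i) = P (⋃ i ∈ s, t i) := by
  classical
  induction s using Finset.induction_on with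
  | empty => simp [hP.empty]
  | insert j s hj ih =>
    have hdisj : Disjoint (t j) (⋃ i ∈ s, t i) := disjoint_iUnion₂_right.2 fun i hi =>
      ht (by simp) (by simp [hi]) (ne_of_mem_of_not_mem hi hj).symm
    rw [Finset.sum_insert hj, Finset.set_biUnion_insert, hP.union_of_disjoint hdisj,
      ih (ht.subset (by simp))]

theorem compression_eq_mul (hP : IsSpectralMeasure A P) (s : Set ℝ) : P s * A * P s = A * P s := by
  rw [← hP.commutes, mul_assoc, (hP.isIdem s).eq]

theorem sum_gridIoc (hP : IsSpectralMeasure A P) (hA₀ : 0 ≤ A) (hA₁ : A ≤ 1) (hm : 0 < m) :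
    ∑ j ∈ Finset.Icc (-1 : ℤ) m, P (gridIoc m j) = 1 := by
  have hm' : (0 : ℝ) < m := by exact_mod_cast hm
  rw [hP.sum_eq_biUnion _ ((pairwise_disjoint_gridIoc hm).set_pairwise _)]
  refine hP.eq_one_of_Ioc_subset hA₀ hA₁ (div_neg_of_neg_of_pos (by norm_num) hm') ?_
    (Ioc_subset_biUnion_gridIoc hm)
  rw [one_lt_div hm']
  linarith

theorem norm_sub_sum_gridIoc_le (hP : IsSpectralMeasure A P) (hA₀ : 0 ≤ A) (hA₁ : A ≤ 1)
    (hm : 0 < m) :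
    ‖A - ∑ j ∈ Finset.Icc (-1 : ℤ) m, ((j : ℝ) / m) • P (gridIoc m j)‖ ≤ 1 / m := by
  set T := Finset.Icc (-1 : ℤ) m
  set Q := fun j => P (gridIoc m j)
  have hsum : ∑ j ∈ T, Q j = 1 := hP.sum_gridIoc hA₀ hA₁ hm
  have hA : ∑ j ∈ T, Q j * A * Q j = A := by
    simp only [hP.compression_eq_mul, ← Finset.mul_sum, hsum, mul_one, Q]
  have hlo : ∀ j, 0 ≤ Q j * A * Q j - ((j : ℝ) / m) • Q j := fun j => by
    rw [sub_nonneg, ← Complex.coe_smul]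
    exact hP.smul_le _ _
  have hhi : ∀ j, Q j * A * Q j - ((j : ℝ) / m) • Q j ≤ (1 / m : ℝ) • Q j := fun j => by
    rw [sub_le_iff_le_add', ← add_smul, ← add_div, ← Complex.coe_smul]
    exact hP.le_smul _ _
  rw [← hA, ← Finset.sum_sub_distrib]
  calc _ ≤ ‖(1 / m : ℝ) • (1 : H →L[ℂ] H)‖ :=
        CStarAlgebra.norm_le_norm_of_nonneg_of_le (Finset.sum_nonneg fun j _ => hlo j) <| by
          rw [← hsum, Finset.smul_sum]
          exact Finset.sum_le_sum fun j _ => hhi j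
    _ ≤ 1 / m := by
      rw [norm_smul, Real.norm_of_nonneg (by positivity)]
      exact mul_le_of_le_one_right (by positivity) ContinuousLinearMap.norm_id_le

end IsSpectralMeasure

section Fproj

variable {H : Type*} [NormedAddCommGroup H] [InnerProductSpace ℂ H] [CompleteSpace H] {n : ℕ}
  {P : Fin n → Set ℝ → H →L[ℂ] H} {m : ℕ}

theorem Fproj_eq (k : Fin n → ℤ) : Fproj P m k = (List.ofFn fun i => P i (gridIoc m (k i))).prod :=
  rfl

theorem sum_Fproj_eq_one {t : Finset ℤ} (ht : ∀ i, ∑ j ∈ t, P i (gridIoc m j) = 1) :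
    ∑ k ∈ Fintype.piFinset fun _ => t, Fproj P m k = 1 := by
  simp only [Fproj_eq]
  rw [← prod_ofFn_sum_eq_sum_piFinset (fun _ => t) fun i j => P i (gridIoc m j)]
  simp [ht]

theorem commute_Fproj (hPcomm : ∀ i j s t, P i s * P j t = P j t * P i s) (i : Fin n)
    (s : Set ℝ) (k : Fin n → ℤ) : Commute (P i s) (Fproj P m k) :=
  Commute.list_prod_right _ _ fun _ hy => by
    obtain ⟨j, rfl⟩ := List.mem_ofFn.1 hy
    exact hPcomm _ _ _ _

theorem mul_Fproj {A : H →L[ℂ] H} {i₀ : Fin n} (hP : IsSpectralMeasure A (P i₀))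
    (hPcomm : ∀ i j s t, P i s * P j t = P j t * P i s) (hm : 0 < m) (r : ℤ) (k : Fin n → ℤ) :
    P i₀ (gridIoc m r) * Fproj P m k = if k i₀ = r then Fproj P m k else 0 := by
  have habsorb : P i₀ (gridIoc m (k i₀)) * Fproj P m k = Fproj P m k :=
    (hP.isIdem _).mul_list_prod_of_mem (List.mem_ofFn.2 ⟨i₀, rfl⟩) fun _ hy => by
      obtain ⟨j, rfl⟩ := List.mem_ofFn.1 hy
      exact hPcomm _ _ _ _
  split_ifs with h
  · rwa [← h]
  · rw [← habsorb, ← mul_assoc,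
      hP.mul_eq_zero_of_disjoint (pairwise_disjoint_gridIoc hm (Ne.symm h)), zero_mul]

end Fproj

theorem exists_Fproj_compression_ne_zero_general {H : Type*} [NormedAddCommGroup H]
    [InnerProductSpace ℂ H] [CompleteSpace H] {n : ℕ}
    (E : Fin n → H →L[ℂ] H) (P : Fin n → Set ℝ → H →L[ℂ] H)
    (heff : ∀ i, 0 ≤ E i ∧ E i ≤ 1)
    (hP : ∀ i, IsSpectralMeasure (E i) (P i))
    (hPcomm : ∀ i j s t, P i s * P j t = P j t * P i s)
    (B : H →L[ℂ] H)
    (hB : ∃ i₀, B * E i₀ ≠ E i₀ * B) :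
    ∃ (m : ℕ), 0 < m ∧ ∃ k k' : Fin n → ℤ, (∃ i, k i ≠ k' i) ∧
      Fproj P m k * B * Fproj P m k' ≠ 0 := by
  by_contra! hcon
  obtain ⟨i₀, hBE⟩ := hB
  have hcommute (m : ℕ) (hm : 0 < m) (r : ℤ) : Commute (P i₀ (gridIoc m r)) B :=
    commute_of_offDiag_eq_zero
      (sum_Fproj_eq_one fun i => (hP i).sum_gridIoc (heff i).1 (heff i).2 hm) (fun k => k i₀) r
      (mul_Fproj (hP i₀) hPcomm hm r) (commute_Fproj hPcomm i₀ _)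
      fun k _ k' _ h => hcon m hm k k' ⟨i₀, h⟩
  have hbound (m : ℕ) (hm : 0 < m) : ‖B * E i₀ - E i₀ * B‖ ≤ 2 * ‖B‖ * (1 / m) := by
    have hD : Commute B (∑ j ∈ Finset.Icc (-1 : ℤ) m, ((j : ℝ) / m) • P i₀ (gridIoc m j)) :=
      Commute.sum_right _ _ _ fun j _ => (hcommute m hm j).symm.smul_right _
    calc ‖B * E i₀ - E i₀ * B‖ ≤ 2 * ‖B‖ * ‖E i₀ - _‖ := norm_commutator_le_of_commute hD
      _ ≤ 2 * ‖B‖ * (1 / m) := by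
        gcongr
        exact (hP i₀).norm_sub_sum_gridIoc_le (heff i₀).1 (heff i₀).2 hm
  have hlim : Tendsto (fun m : ℕ => 2 * ‖B‖ * (1 / (m : ℝ))) atTop (𝓝 0) := by
    simpa using tendsto_one_div_atTop_nhds_zero_nat.const_mul (2 * ‖B‖)
  exact hBE <| sub_eq_zero.1 <| norm_le_zero_iff.1 <|
    ge_of_tendsto hlim (eventually_atTop.2 ⟨1, fun m hm => hbound m hm⟩)

/-- Lemma 2.2: if `B` fails to commute with some `E_{i₀}`, then some compression
`F^m_{k} B F^m_{k'}` with `k ≠ k'` is nonzero. -/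
theorem exists_Fproj_compression_ne_zero {H : Type*} [NormedAddCommGroup H]
    [InnerProductSpace ℂ H] [CompleteSpace H] {n : ℕ}
    (E : Fin n → H →L[ℂ] H) (P : Fin n → Set ℝ → H →L[ℂ] H)
    (heff : ∀ i, 0 ≤ E i ∧ E i ≤ 1)
    (hcomm : ∀ i j, E i * E j = E j * E i)
    (hP : ∀ i, IsSpectralMeasure (E i) (P i))
    (hPcomm : ∀ i j s t, P i s * P j t = P j t * P i s)
    (B : H →L[ℂ] H)
    (hB : ∃ i₀, B * E i₀ ≠ E i₀ * B) :
    ∃ (m : ℕ), 0 < m ∧ ∃ k k' : Fin n → ℤ, (∃ i, k i ≠ k' i) ∧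
      Fproj P m k * B * Fproj P m k' ≠ 0 :=
  exists_Fproj_compression_ne_zero_general E P heff hP hPcomm B hB
end

section
/- Let A = {E_i}_{i=1}^n (n possibly infinite) be a family of effects on a complex Hilbert space with ∑_{i=1}^n E_i² converging in the strong operator topology. Then the Lüders operation Φ_A(B) = ∑_i E_i B E_i is a bounded linear map on B(H) with ‖Φ_A‖ = ‖∑_i E_i²‖. -/
/-!
For self-adjoint `Eᵢ` with `∑ Eᵢ² = F` strongly, `∑ ‖Eᵢ x‖² = re ⟪x, F x⟫ ≤ ‖F‖ ‖x‖²`, so the column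
map `C x = (Eᵢ x)ᵢ` into `ℓ²(H)` has norm at most `√‖F‖`, and by duality so has the row map
`R (yᵢ) = ∑ Eᵢ yᵢ`. Since `Φ(B) = R ∘ (B ⊕ B ⊕ ⋯) ∘ C`, the series converges and
`‖Φ(B)‖ ≤ ‖F‖ ‖B‖`; equality is attained at `B = 1`, where `Φ(1) = F`.
-/

open scoped InnerProductSpace

theorem Summable.of_norm_sum_sq_le {ι G : Type*} [NormedAddCommGroup G] [CompleteSpace G]
    {f : ι → G} {g : ι → ℝ} (hg : Summable g) (C : ℝ)
    (h : ∀ t : Finset ι, ‖∑ i ∈ t, f i‖ ^ 2 ≤ C * ∑ i ∈ t, g i) : Summable f := by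
  refine summable_iff_vanishing_norm.mpr fun ε hε => ?_
  obtain ⟨s, hs⟩ := summable_iff_vanishing_norm.mp hg (ε ^ 2 / (|C| + 1)) (by positivity)
  refine ⟨s, fun t hts => ?_⟩
  have hsq : ‖∑ i ∈ t, f i‖ ^ 2 < ε ^ 2 :=
    calc ‖∑ i ∈ t, f i‖ ^ 2 ≤ C * ∑ i ∈ t, g i := h t
      _ ≤ |C| * ‖∑ i ∈ t, g i‖ := by rw [Real.norm_eq_abs, ← abs_mul]; exact le_abs_self _
      _ ≤ |C| * (ε ^ 2 / (|C| + 1)) := by gcongr; exact (hs t hts).le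
      _ < ε ^ 2 := by
        rw [mul_div_assoc', div_lt_iff₀ (by positivity)]
        nlinarith [sq_pos_of_pos hε]
  exact (pow_lt_pow_iff_left₀ (norm_nonneg _) hε.le two_ne_zero).mp hsq

section Luders

variable {𝕜 H ι : Type*} [RCLike 𝕜] [NormedAddCommGroup H] [InnerProductSpace 𝕜 H]
  [CompleteSpace H] {E : ι → H →L[𝕜] H} {F : H →L[𝕜] H}
  (hE : ∀ i, IsSelfAdjoint (E i)) (hF : ∀ x, HasSum (fun i => E i (E i x)) (F x))
include hE hF

theorem hasSum_norm_sq_apply (x : H) :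
    HasSum (fun i => ‖E i x‖ ^ 2) (RCLike.re ⟪x, F x⟫_𝕜) := by
  have h := ((hF x).mapL (innerSL 𝕜 x)).mapL RCLike.reCLM
  refine h.congr_fun fun i => ?_
  rw [← inner_self_eq_norm_sq (𝕜 := 𝕜)]
  exact congrArg _ ((hE i).isSymmetric x (E i x))

theorem sum_norm_sq_apply_le (t : Finset ι) (x : H) :
    ∑ i ∈ t, ‖E i x‖ ^ 2 ≤ ‖F‖ * ‖x‖ ^ 2 :=
  calc ∑ i ∈ t, ‖E i x‖ ^ 2 ≤ RCLike.re ⟪x, F x⟫_𝕜 :=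
        sum_le_hasSum t (fun i _ => sq_nonneg _) (hasSum_norm_sq_apply hE hF x)
    _ ≤ ‖⟪x, F x⟫_𝕜‖ := RCLike.re_le_norm _
    _ ≤ ‖x‖ * ‖F x‖ := norm_inner_le_norm _ _
    _ ≤ ‖x‖ * (‖F‖ * ‖x‖) := by gcongr; exact F.le_opNorm x
    _ = ‖F‖ * ‖x‖ ^ 2 := by ring

theorem norm_sum_apply_sq_le (t : Finset ι) (y : ι → H) :
    ‖∑ i ∈ t, E i (y i)‖ ^ 2 ≤ ‖F‖ * ∑ i ∈ t, ‖y i‖ ^ 2 := by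
  set v := ∑ i ∈ t, E i (y i)
  have hv : ‖v‖ ^ 2 ≤ ∑ i ∈ t, ‖y i‖ * ‖E i v‖ :=
    calc ‖v‖ ^ 2 = RCLike.re ⟪v, v⟫_𝕜 := (inner_self_eq_norm_sq v).symm
      _ = ∑ i ∈ t, RCLike.re ⟪y i, E i v⟫_𝕜 := by
        rw [sum_inner, map_sum]
        exact Finset.sum_congr rfl fun i _ => congrArg _ ((hE i).isSymmetric _ _)
      _ ≤ ∑ i ∈ t, ‖y i‖ * ‖E i v‖ := by
        gcongr with i
        exact (RCLike.re_le_norm _).trans (norm_inner_le_norm _ _)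
  have hsq : ‖v‖ ^ 2 * ‖v‖ ^ 2 ≤ (‖F‖ * ∑ i ∈ t, ‖y i‖ ^ 2) * ‖v‖ ^ 2 :=
    calc ‖v‖ ^ 2 * ‖v‖ ^ 2 ≤ (∑ i ∈ t, ‖y i‖ * ‖E i v‖) ^ 2 := by
          rw [← sq]; gcongr
      _ ≤ (∑ i ∈ t, ‖y i‖ ^ 2) * ∑ i ∈ t, ‖E i v‖ ^ 2 := Finset.sum_mul_sq_le_sq_mul_sq _ _ _
      _ ≤ (∑ i ∈ t, ‖y i‖ ^ 2) * (‖F‖ * ‖v‖ ^ 2) := by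
          gcongr; exact sum_norm_sq_apply_le hE hF t v
      _ = (‖F‖ * ∑ i ∈ t, ‖y i‖ ^ 2) * ‖v‖ ^ 2 := by ring
  rcases (sq_nonneg ‖v‖).eq_or_lt with h0 | h0
  · rw [← h0]; positivity
  · exact le_of_mul_le_mul_right hsq h0

theorem norm_sum_luders_sq_le (B : H →L[𝕜] H) (x : H) (t : Finset ι) :
    ‖∑ i ∈ t, E i (B (E i x))‖ ^ 2 ≤ ‖F‖ * ‖B‖ ^ 2 * ∑ i ∈ t, ‖E i x‖ ^ 2 :=
  calc ‖∑ i ∈ t, E i (B (E i x))‖ ^ 2 ≤ ‖F‖ * ∑ i ∈ t, ‖B (E i x)‖ ^ 2 :=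
        norm_sum_apply_sq_le hE hF t _
    _ ≤ ‖F‖ * ∑ i ∈ t, (‖B‖ * ‖E i x‖) ^ 2 := by gcongr with i; exact B.le_opNorm _
    _ = ‖F‖ * ‖B‖ ^ 2 * ∑ i ∈ t, ‖E i x‖ ^ 2 := by simp only [mul_pow, Finset.mul_sum, mul_assoc]

theorem summable_luders (B : H →L[𝕜] H) (x : H) : Summable fun i => E i (B (E i x)) :=
  .of_norm_sum_sq_le (hasSum_norm_sq_apply hE hF x).summable _ (norm_sum_luders_sq_le hE hF B x)

theorem norm_tsum_luders_le (B : H →L[𝕜] H) (x : H) :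
    ‖∑' i, E i (B (E i x))‖ ≤ ‖F‖ * ‖B‖ * ‖x‖ := by
  refine le_of_tendsto' (summable_luders hE hF B x).hasSum.norm fun t => ?_
  refine (pow_le_pow_iff_left₀ (norm_nonneg _) (by positivity) two_ne_zero).mp ?_
  calc ‖∑ i ∈ t, E i (B (E i x))‖ ^ 2 ≤ ‖F‖ * ‖B‖ ^ 2 * ∑ i ∈ t, ‖E i x‖ ^ 2 :=
        norm_sum_luders_sq_le hE hF B x t
    _ ≤ ‖F‖ * ‖B‖ ^ 2 * (‖F‖ * ‖x‖ ^ 2) := by gcongr; exact sum_norm_sq_apply_le hE hF t x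
    _ = (‖F‖ * ‖B‖ * ‖x‖) ^ 2 := by ring

noncomputable def ludersOperation : (H →L[𝕜] H) →L[𝕜] H →L[𝕜] H :=
  LinearMap.mkContinuous₂
    (LinearMap.mk₂ 𝕜 (fun B x => ∑' i, E i (B (E i x)))
      (fun B₁ B₂ x => by
        simp only [add_apply, map_add]
        exact (summable_luders hE hF B₁ x).tsum_add (summable_luders hE hF B₂ x))
      (fun c B x => by
        simp only [smul_apply, map_smul]
        exact (summable_luders hE hF B x).tsum_const_smul c)
      (fun B x₁ x₂ => by
        simp only [map_add]
        exact (summable_luders hE hF B x₁).tsum_add (summable_luders hE hF B x₂))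
      (fun c B x => by
        simp only [map_smul]
        exact (summable_luders hE hF B x).tsum_const_smul c))
    ‖F‖ (norm_tsum_luders_le hE hF)

theorem hasSum_ludersOperation_apply (B : H →L[𝕜] H) (x : H) :
    HasSum (fun i => E i (B (E i x))) (ludersOperation hE hF B x) :=
  (summable_luders hE hF B x).hasSum

theorem ludersOperation_one : ludersOperation hE hF 1 = F :=
  ContinuousLinearMap.ext fun x => (hasSum_ludersOperation_apply hE hF 1 x).unique (hF x)

theorem norm_ludersOperation : ‖ludersOperation hE hF‖ = ‖F‖ := by
  refine le_antisymm (LinearMap.mkContinuous₂_norm_le _ (norm_nonneg F) _) ?_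
  calc ‖F‖ = ‖ludersOperation hE hF 1‖ := by rw [ludersOperation_one]
    _ ≤ ‖ludersOperation hE hF‖ * ‖(1 : H →L[𝕜] H)‖ := (ludersOperation hE hF).le_opNorm 1
    _ ≤ ‖ludersOperation hE hF‖ :=
        mul_le_of_le_one_right (norm_nonneg (ludersOperation hE hF)) ContinuousLinearMap.norm_id_le

end Luders

/-- If `∑ Eᵢ²` converges strongly to `F`, then the Lüders operation `Φ_A(B) = ∑ Eᵢ B Eᵢ`
is a bounded linear map on `B(H)` with `‖Φ_A‖ = ‖F‖ = ‖∑ Eᵢ²‖`. -/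
theorem luders_operation_norm {H : Type*} [NormedAddCommGroup H] [InnerProductSpace ℂ H]
    [CompleteSpace H] {ι : Type*} (E : ι → H →L[ℂ] H)
    (heff : ∀ i, 0 ≤ E i ∧ E i ≤ 1)
    (F : H →L[ℂ] H) (hF : ∀ x, HasSum (fun i => E i (E i x)) (F x)) :
    ∃ Φ : (H →L[ℂ] H) →L[ℂ] (H →L[ℂ] H),
      (∀ B x, HasSum (fun i => E i (B (E i x))) (Φ B x)) ∧ ‖Φ‖ = ‖F‖ := by
  have hE : ∀ i, IsSelfAdjoint (E i) := fun i => .of_nonneg (heff i).1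
  exact ⟨ludersOperation hE hF, hasSum_ludersOperation_apply hE hF, norm_ludersOperation hE hF⟩
end

section
/- Let E₁,...,E_n be pairwise commuting effects with F = ∑ E_i² ≤ I and let P = P^F({1}). If B ∈ B(H) commutes with all E_i and PB = B, then B is a fixed point of Φ_A: ∑_i E_i B E_i = B. -/
/-!
Write `Q = P^F({1})`. Compressing the spectral bounds `a • P(a, 1] ≤ P(a, 1] F P(a, 1] ≤ P(a, 1]`
by `Q` squeezes `Q F Q` between `a • Q` and `Q` for every `a < 1`, so `F Q = Q F Q = Q`.
A `B` commuting with every `Eᵢ` turns `∑ Eᵢ B Eᵢ` into `F B = F Q B = Q B = B`.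
-/

open Set

namespace CStarAlgebra

variable {A : Type*} [NonUnitalCStarAlgebra A] [PartialOrder A] [StarOrderedRing A]

theorem eq_smul_of_forall_lt_smul_le {x y : A} {b : ℝ}
    (hlow : ∀ a : ℝ, a < b → (a : ℂ) • y ≤ x) (hup : x ≤ (b : ℂ) • y) :
    x = (b : ℂ) • y := by
  set d := (b : ℂ) • y - x
  have hd : 0 ≤ d := sub_nonneg.mpr hup
  have hsmall : ∀ ε : ℝ, 0 < ε → ‖d‖ ≤ ε * ‖y‖ := by
    intro ε hε
    have hle : d ≤ (ε : ℂ) • y := by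
      have := hlow (b - ε) (by linarith)
      rw [Complex.ofReal_sub, sub_smul] at this
      exact sub_le_comm.mp this
    calc ‖d‖ ≤ ‖(ε : ℂ) • y‖ := norm_le_norm_of_nonneg_of_le hd hle
      _ = ε * ‖y‖ := by rw [norm_smul, Complex.norm_real, Real.norm_of_nonneg hε.le]
  have hlim : Filter.Tendsto (fun ε : ℝ => ε * ‖y‖) (nhdsWithin 0 (Ioi 0)) (nhds 0) := by
    apply tendsto_nhdsWithin_of_tendsto_nhds
    simpa using (continuous_id.mul continuous_const).tendsto (0 : ℝ) (f := fun ε : ℝ => ε * ‖y‖)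
  have hd0 : ‖d‖ ≤ 0 :=
    ge_of_tendsto hlim (eventually_nhdsWithin_of_forall fun ε hε => hsmall ε hε)
  exact (sub_eq_zero.mp (norm_le_zero_iff.mp hd0)).symm

end CStarAlgebra

namespace IsSpectralMeasure

variable {H : Type*} [NormedAddCommGroup H] [InnerProductSpace ℂ H] [CompleteSpace H]
  {A : H →L[ℂ] H} {P : Set ℝ → H →L[ℂ] H}

theorem mul_eq_left_of_subset (hP : IsSpectralMeasure A P) {s t : Set ℝ} (hst : s ⊆ t) :
    P s * P t = P s := by
  rw [← hP.inter, inter_eq_left.mpr hst]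

theorem mul_eq_right_of_subset (hP : IsSpectralMeasure A P) {s t : Set ℝ} (hst : s ⊆ t) :
    P t * P s = P s := by
  rw [← hP.inter, inter_eq_right.mpr hst]

theorem compress_compress_of_subset (hP : IsSpectralMeasure A P) {s t : Set ℝ} (hst : s ⊆ t)
    (X : H →L[ℂ] H) : P s * (P t * X * P t) * P s = P s * X * P s := by
  rw [← mul_assoc, ← mul_assoc, hP.mul_eq_left_of_subset hst, mul_assoc, mul_assoc,
    hP.mul_eq_right_of_subset hst, ← mul_assoc]

theorem compress_smul_of_subset (hP : IsSpectralMeasure A P) {s t : Set ℝ} (hst : s ⊆ t)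
    (c : ℂ) : P s * (c • P t) * P s = c • P s := by
  rw [mul_smul_comm, smul_mul_assoc, hP.mul_eq_left_of_subset hst, (hP.isIdem s).eq]

theorem compress_singleton (hP : IsSpectralMeasure A P) (l : ℝ) :
    P {l} * A * P {l} = (l : ℂ) • P {l} := by
  have hsub : ∀ a < l, {l} ⊆ Ioc a l := fun a ha => singleton_subset_iff.mpr ⟨ha, le_rfl⟩
  refine CStarAlgebra.eq_smul_of_forall_lt_smul_le (fun a ha => ?_) ?_
  · simpa only [hP.compress_smul_of_subset (hsub a ha), hP.compress_compress_of_subset (hsub a ha)]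
      using (hP.selfAdj {l}).conjugate_le_conjugate (hP.smul_le a l)
  · have hl : l - 1 < l := by linarith
    simpa only [hP.compress_smul_of_subset (hsub _ hl), hP.compress_compress_of_subset (hsub _ hl)]
      using (hP.selfAdj {l}).conjugate_le_conjugate (hP.le_smul (l - 1) l)

theorem mul_singleton (hP : IsSpectralMeasure A P) (l : ℝ) :
    A * P {l} = (l : ℂ) • P {l} := by
  rw [← hP.compress_singleton, ← hP.commutes, mul_assoc, (hP.isIdem {l}).eq]

end IsSpectralMeasure

theorem fixedPoint_of_commutes_and_proj_general {H : Type*} [NormedAddCommGroup H]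
    [InnerProductSpace ℂ H] [CompleteSpace H] {n : ℕ}
    (E : Fin n → H →L[ℂ] H)
    (PF : Set ℝ → H →L[ℂ] H) (hPF : IsSpectralMeasure (∑ i, E i * E i) PF)
    (B : H →L[ℂ] H) (hBc : ∀ i, B * E i = E i * B)
    (hPB : PF {1} * B = B) :
    ∑ i, E i * B * E i = B := by
  have hBF : Commute B (∑ i, E i * E i) :=
    Commute.sum_right _ _ _ fun i _ => Commute.mul_right (hBc i) (hBc i)
  calc ∑ i, E i * B * E i = B * ∑ i, E i * E i := by
        rw [Finset.mul_sum]
        exact Finset.sum_congr rfl fun i _ => by rw [← hBc i, mul_assoc]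
    _ = (∑ i, E i * E i) * (PF {1} * B) := by rw [hBF.eq, hPB]
    _ = B := by rw [← mul_assoc, hPF.mul_singleton, Complex.ofReal_one, one_smul, hPB]

/-- If `B` commutes with all `Eᵢ` and `P^F({1}) B = B` where `F = ∑ Eᵢ² ≤ I`, then `B` is
a fixed point of the Lüders operation. -/
theorem fixedPoint_of_commutes_and_proj {H : Type*} [NormedAddCommGroup H]
    [InnerProductSpace ℂ H] [CompleteSpace H] {n : ℕ}
    (E : Fin n → H →L[ℂ] H)
    (heff : ∀ i, 0 ≤ E i ∧ E i ≤ 1)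
    (hcomm : ∀ i j, E i * E j = E j * E i)
    (hsum : ∑ i, E i * E i ≤ 1)
    (PF : Set ℝ → H →L[ℂ] H) (hPF : IsSpectralMeasure (∑ i, E i * E i) PF)
    (B : H →L[ℂ] H) (hBc : ∀ i, B * E i = E i * B)
    (hPB : PF {1} * B = B) :
    ∑ i, E i * B * E i = B :=
  fixedPoint_of_commutes_and_proj_general E PF hPF B hBc hPB
end
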